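/- Let $A$ and $B$ be unit quaternions such that $A B = -B A$. Then there exists a unit quaternion $q$ such that $q A q^{-1} = i$ and $q B q^{-1} = j$. -/

import Mathlib

/-!
Let `Q = {±1, ±i, ±j, ±k}` and let `φ : Q → ℍ` send `i ↦ A`, `j ↦ B`; the relations
`A² = B² = -1`, `AB = -BA` (unit quaternions anticommuting with a nonzero quaternion are pure)
make `φ` a homomorphism. The averaging operator `x ↦ ∑_{g ∈ Q} g x φ(g)⁻¹` then intertwines `φ`
with the inclusion, so any nonzero value `u` satisfies `u A = i u` and `u B = j u`, and
`q = u / ‖u‖` is the required unit. The operator is nonzero because its trace is `8`: the terms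
`g = ±1` contribute `4` each, while `x ↦ g x h` has trace `4 (re g) (re h) = 0` for the others.
-/

open Quaternion

structure IsQuaternionPair {R : Type*} [Ring R] (u v : R) : Prop where
  mul_self_fst : u * u = -1
  mul_self_snd : v * v = -1
  anticomm : u * v = -(v * u)

section Ring

variable {R : Type*} [Ring R]

theorem IsQuaternionPair.symm {u v : R} (h : IsQuaternionPair u v) : IsQuaternionPair v u :=
  ⟨h.mul_self_snd, h.mul_self_fst, by rw [h.anticomm, neg_neg]⟩

/-- Half the sum over the quaternion group of `g * x * φ g⁻¹`, where `φ` sends `e₁ ↦ a`,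
`e₂ ↦ b`. -/
def intertwiner (e₁ e₂ a b x : R) : R :=
  x - e₁ * x * a - e₂ * x * b - e₁ * e₂ * x * (a * b)

variable {e₁ e₂ a b : R}

theorem intertwiner_comm (he : IsQuaternionPair e₁ e₂) (hab : IsQuaternionPair a b) (x : R) :
    intertwiner e₂ e₁ b a x = intertwiner e₁ e₂ a b x := by
  simp only [intertwiner, he.symm.anticomm, hab.symm.anticomm]
  noncomm_ring

theorem intertwiner_mul_fst (he : IsQuaternionPair e₁ e₂) (hab : IsQuaternionPair a b) (x : R) :
    intertwiner e₁ e₂ a b x * a = e₁ * intertwiner e₁ e₂ a b x := by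
  have haba : a * b * a = b := by
    rw [mul_assoc, ← neg_neg (b * a), ← hab.anticomm, mul_neg, ← mul_assoc, hab.mul_self_fst,
      neg_one_mul, neg_neg]
  have he₁e₁e₂ : e₁ * (e₁ * e₂) = -e₂ := by rw [← mul_assoc, he.mul_self_fst, neg_one_mul]
  simp only [intertwiner, sub_mul, mul_sub, mul_assoc, hab.mul_self_fst, haba]
  simp only [← mul_assoc, he.mul_self_fst, he₁e₁e₂, hab.anticomm]
  noncomm_ring

theorem intertwiner_mul_snd (he : IsQuaternionPair e₁ e₂) (hab : IsQuaternionPair a b) (x : R) :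
    intertwiner e₁ e₂ a b x * b = e₂ * intertwiner e₁ e₂ a b x := by
  rw [← intertwiner_comm he hab]
  exact intertwiner_mul_fst he.symm hab.symm x

end Ring

namespace Quaternion

theorem re_mul_comm (x y : ℍ[ℝ]) : (x * y).re = (y * x).re := by
  simp only [re_mul]
  ring

theorem re_eq_zero_of_mul_eq_neg_mul {a b : ℍ[ℝ]} (hb : b ≠ 0) (h : b * a = -(a * b)) :
    a.re = 0 := by
  have hconj : b * a * b⁻¹ = -a := by
    rw [h, neg_mul, mul_assoc, mul_inv_cancel₀ hb, mul_one]
  have hre := congrArg (·.re) hconj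
  simp only [re_mul_comm (b * a), ← mul_assoc, inv_mul_cancel₀ hb, one_mul, re_neg] at hre
  linarith

theorem mul_self_eq_neg_one {a : ℍ[ℝ]} (ha : ‖a‖ = 1) (hre : a.re = 0) : a * a = -1 := by
  have h := self_mul_star a
  rw [star_eq_neg.2 hre, normSq_eq_norm_mul_self, ha, mul_neg] at h
  simpa using congrArg Neg.neg h

theorem isQuaternionPair_of_norm_eq_one {a b : ℍ[ℝ]} (ha : ‖a‖ = 1) (hb : ‖b‖ = 1)
    (h : a * b = -(b * a)) : IsQuaternionPair a b := by
  have h' : b * a = -(a * b) := by rw [h, neg_neg]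
  refine ⟨mul_self_eq_neg_one ha ?_, mul_self_eq_neg_one hb ?_, h⟩
  · exact re_eq_zero_of_mul_eq_neg_mul (norm_ne_zero_iff.1 (by simp [hb])) h'
  · exact re_eq_zero_of_mul_eq_neg_mul (norm_ne_zero_iff.1 (by simp [ha])) h

theorem isQuaternionPair_i_j : IsQuaternionPair (⟨0, 1, 0, 0⟩ : ℍ[ℝ]) ⟨0, 0, 1, 0⟩ := by
  refine ⟨?_, ?_, ?_⟩ <;> ext <;> simp

/-- The left-hand side is the trace of the `ℝ`-linear map `intertwiner i j a b`. -/
theorem intertwiner_trace_eq_four (a b : ℍ[ℝ]) :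
    let P := intertwiner (⟨0, 1, 0, 0⟩ : ℍ[ℝ]) ⟨0, 0, 1, 0⟩ a b
    (P 1).re + (P ⟨0, 1, 0, 0⟩).imI + (P ⟨0, 0, 1, 0⟩).imJ + (P ⟨0, 0, 0, 1⟩).imK = 4 := by
  obtain ⟨a₀, a₁, a₂, a₃⟩ := a
  obtain ⟨b₀, b₁, b₂, b₃⟩ := b
  simp [intertwiner]
  ring

theorem exists_intertwiner_ne_zero (a b : ℍ[ℝ]) :
    ∃ x, intertwiner (⟨0, 1, 0, 0⟩ : ℍ[ℝ]) ⟨0, 0, 1, 0⟩ a b x ≠ 0 := by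
  by_contra! hzero
  have := intertwiner_trace_eq_four a b
  norm_num [hzero] at this

theorem exists_norm_eq_one_conj_eq {u : ℍ[ℝ]} (hu : u ≠ 0) :
    ∃ q : ℍ[ℝ], ‖q‖ = 1 ∧ ∀ x y, u * x = y * u → q * x * q⁻¹ = y := by
  have hn : ‖u‖ ≠ 0 := norm_ne_zero_iff.2 hu
  have hq : ‖u‖⁻¹ • u ≠ 0 := smul_ne_zero (inv_ne_zero hn) hu
  refine ⟨‖u‖⁻¹ • u, by rw [norm_smul, norm_inv, norm_norm, inv_mul_cancel₀ hn], ?_⟩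
  intro x y hxy
  rw [mul_inv_eq_iff_eq_mul₀ hq, smul_mul_assoc, hxy, mul_smul_comm]

end Quaternion

/-- Up to simultaneous conjugation by a unit quaternion, the only anticommuting pair of
unit quaternions is `(i, j)`. -/
theorem stmt_5 (A B : ℍ[ℝ]) (hA : ‖A‖ = 1) (hB : ‖B‖ = 1)
    (h : A * B = -(B * A)) :
    ∃ q : ℍ[ℝ], ‖q‖ = 1 ∧
      q * A * q⁻¹ = (⟨0, 1, 0, 0⟩ : ℍ[ℝ]) ∧
      q * B * q⁻¹ = (⟨0, 0, 1, 0⟩ : ℍ[ℝ]) := by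
  have hAB := isQuaternionPair_of_norm_eq_one hA hB h
  obtain ⟨x, hx⟩ := exists_intertwiner_ne_zero A B
  obtain ⟨q, hq, hconj⟩ := exists_norm_eq_one_conj_eq hx
  exact ⟨q, hq, hconj _ _ (intertwiner_mul_fst isQuaternionPair_i_j hAB x),
    hconj _ _ (intertwiner_mul_snd isQuaternionPair_i_j hAB x)⟩
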